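/- arXiv:2203.02000 — 5 statements merged into one kernel-verified Lean document; each statement's English description precedes it below -/
import Mathlib

section
/- Let U ⊆ ℂ^r be open, f : U → ℂ^r analytic, and x₀ ∈ U. Let ρ > 0 and B₁, B₂, B₃ ≥ 1 be real numbers such that D_ρ(x₀) ⊆ U, ‖df(x)‖ ≤ B₁ and ‖d²f(x)‖ ≤ B₂ for all x ∈ D_ρ(x₀), and df(x₀) is invertible with ‖df(x₀)⁻¹‖ ≤ B₃. Let ε, η > 0 satisfy ε ≤ min(ρ/2, 1/(2B₂B₃)) and η ≤ ε/(4rB₁B₃). Then for every x ∈ ℂ^r with ‖x − x₀‖ ≤ ε, the linear map FD_η f(x) is invertible, and the vector h = FD_η f(x)⁻¹ (f(x₀) − f(x)) satisfies ‖x + h − x₀‖ ≤ 2B₂B₃ε². -/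
/-!
Near `x₀` the finite-difference operator `FD_η f(x)` is a small perturbation of the invertible
derivative `df(x₀)`: it differs from `df(x)` by at most `r B₂ η / 2` (second-order Taylor bound on
each column) and `df(x)` differs from `df(x₀)` by at most `B₂ ε`. With the constraints on `ε` and
`η` this makes `‖df(x₀)⁻¹ (df(x₀) - FD_η f(x))‖ ≤ 9/16`, so a Neumann series inverts `FD_η f(x)`
with `‖FD_η f(x)⁻¹‖ ≤ 16 B₃ / 7`. The error of the Newton step is
`FD_η f(x)⁻¹` applied to `(FD_η f(x) - df(x))(x - x₀)` plus the Taylor remainder of `f` between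
`x` and `x₀`, which are of size `B₂ ε² / 8B₃` and `B₂ ε² / 2`; hence the bound `2 B₂ B₃ ε²`.
-/

/-- The finite-difference linear operator `FD_η f(x)`, sending the `j`-th standard
basis vector `e_j` to `(f (x + η e_j) - f x) / η`. -/
noncomputable def FD (r : ℕ) (f : (Fin r → ℂ) → (Fin r → ℂ)) (η : ℝ) (x : Fin r → ℂ) :
    (Fin r → ℂ) →L[ℂ] (Fin r → ℂ) :=
  ∑ j : Fin r, (ContinuousLinearMap.proj j : (Fin r → ℂ) →L[ℂ] ℂ).smulRight
    ((η : ℂ)⁻¹ • (f (x + (η : ℂ) • (Pi.single j 1 : Fin r → ℂ)) - f x))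

theorem Units.exists_val_eq_and_norm_inv_le {R : Type*} [NormedRing R] [HasSummableGeomSeries R]
    [NormOneClass R] (u : Rˣ) (a : R) {q : ℝ} (hq : ‖(↑u⁻¹ : R) * (u - a)‖ ≤ q) (hq1 : q < 1) :
    ∃ v : Rˣ, (v : R) = a ∧ ‖(↑v⁻¹ : R)‖ ≤ ‖(↑u⁻¹ : R)‖ / (1 - q) := by
  set t := (↑u⁻¹ : R) * (u - a)
  have ht : ‖t‖ < 1 := hq.trans_lt hq1
  refine ⟨u * Units.oneSub t ht, by simp [t, mul_sub], ?_⟩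
  have hgeom : ‖∑' n, t ^ n‖ ≤ (1 - q)⁻¹ := by
    have := tsum_geometric_le_of_norm_lt_one t ht
    rw [norm_one, sub_self, zero_add] at this
    exact this.trans (inv_anti₀ (by linarith) (by linarith))
  calc ‖(↑(u * Units.oneSub t ht)⁻¹ : R)‖ = ‖(∑' n, t ^ n) * ↑u⁻¹‖ := rfl
    _ ≤ (1 - q)⁻¹ * ‖(↑u⁻¹ : R)‖ := (norm_mul_le _ _).trans (by gcongr)
    _ = ‖(↑u⁻¹ : R)‖ / (1 - q) := by rw [inv_mul_eq_div]

section Taylor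

open Set

variable {𝕜 E F : Type*} [RCLike 𝕜] [NormedAddCommGroup E] [NormedSpace ℝ E] [NormedSpace 𝕜 E]
  [NormedAddCommGroup F] [NormedSpace 𝕜 F] {f : E → F} {s : Set E} {x y : E} {C : ℝ}

theorem Convex.norm_fderiv_sub_le_of_norm_iteratedFDeriv_two_le (hs : Convex ℝ s)
    (hf : ∀ z ∈ s, ContDiffAt 𝕜 2 f z) (bound : ∀ z ∈ s, ‖iteratedFDeriv 𝕜 2 f z‖ ≤ C)
    (hx : x ∈ s) (hy : y ∈ s) : ‖fderiv 𝕜 f y - fderiv 𝕜 f x‖ ≤ C * ‖y - x‖ := by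
  refine hs.norm_image_sub_le_of_norm_fderiv_le (𝕜 := 𝕜) (fun z hz => ?_) (fun z hz => ?_) hx hy
  · exact ((hf z hz).fderiv_right (m := 1) le_rfl).differentiableAt one_ne_zero
  · rw [← norm_iteratedFDeriv_one, norm_iteratedFDeriv_fderiv]
    exact bound z hz

variable [IsScalarTower ℝ 𝕜 E] [NormedSpace ℝ F] [IsScalarTower ℝ 𝕜 F]

theorem Convex.norm_image_sub_sub_fderiv_le (hs : Convex ℝ s)
    (hf : ∀ z ∈ s, DifferentiableAt 𝕜 f z)
    (hlip : ∀ z ∈ s, ‖fderiv 𝕜 f z - fderiv 𝕜 f x‖ ≤ C * ‖z - x‖) (hx : x ∈ s) (hy : y ∈ s) :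
    ‖f y - f x - fderiv 𝕜 f x (y - x)‖ ≤ C / 2 * ‖y - x‖ ^ 2 := by
  set γ : ℝ → E := ⇑(AffineMap.lineMap (k := ℝ) x y)
  have hγ : MapsTo γ (Icc 0 1) s := hs.mapsTo_lineMap hx hy
  set g : ℝ → F := fun t => f (γ t) - f x - t • fderiv 𝕜 f x (y - x)
  have hg : ∀ t ∈ Icc (0:ℝ) 1, HasDerivAt g ((fderiv 𝕜 f (γ t) - fderiv 𝕜 f x) (y - x)) t := by
    intro t ht
    have hfγ := ((hf _ (hγ ht)).hasFDerivAt.restrictScalars ℝ).comp_hasDerivAt t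
      AffineMap.hasDerivAt_lineMap
    exact ((hfγ.sub_const (f x)).fun_sub ((hasDerivAt_id t).smul_const _)).congr_deriv (by simp)
  have hg' : ∀ t ∈ Ico (0:ℝ) 1,
      ‖(fderiv 𝕜 f (γ t) - fderiv 𝕜 f x) (y - x)‖ ≤ C * ‖y - x‖ ^ 2 * t := by
    intro t ht
    have hγx : ‖γ t - x‖ = t * ‖y - x‖ := by
      simp [γ, AffineMap.lineMap_apply, norm_smul, abs_of_nonneg ht.1]
    calc ‖(fderiv 𝕜 f (γ t) - fderiv 𝕜 f x) (y - x)‖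
        ≤ ‖fderiv 𝕜 f (γ t) - fderiv 𝕜 f x‖ * ‖y - x‖ := ContinuousLinearMap.le_opNorm _ _
      _ ≤ C * ‖γ t - x‖ * ‖y - x‖ := by gcongr; exact hlip _ (hγ (Ico_subset_Icc_self ht))
      _ = C * ‖y - x‖ ^ 2 * t := by rw [hγx]; ring
  have hB : ∀ t, HasDerivAt (fun t => C / 2 * ‖y - x‖ ^ 2 * t ^ 2) (C * ‖y - x‖ ^ 2 * t) t :=
    fun t => ((hasDerivAt_pow 2 t).const_mul _).congr_deriv (by norm_num; ring)
  have := image_norm_le_of_norm_deriv_right_le_deriv_boundary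
    (fun t ht => (hg t ht).continuousAt.continuousWithinAt)
    (fun t ht => (hg t (Ico_subset_Icc_self ht)).hasDerivWithinAt) (by simp [g, γ]) hB hg'
    (right_mem_Icc.2 zero_le_one)
  simpa [g, γ] using this

theorem Convex.norm_image_sub_sub_fderiv_le_of_norm_iteratedFDeriv_two_le (hs : Convex ℝ s)
    (hf : ∀ z ∈ s, ContDiffAt 𝕜 2 f z) (bound : ∀ z ∈ s, ‖iteratedFDeriv 𝕜 2 f z‖ ≤ C)
    (hx : x ∈ s) (hy : y ∈ s) : ‖f y - f x - fderiv 𝕜 f x (y - x)‖ ≤ C / 2 * ‖y - x‖ ^ 2 :=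
  hs.norm_image_sub_sub_fderiv_le (fun z hz => (hf z hz).differentiableAt two_ne_zero)
    (fun _ hz => hs.norm_fderiv_sub_le_of_norm_iteratedFDeriv_two_le hf bound hx hz) hx hy

end Taylor

section ColumnOperators

open ContinuousLinearMap

variable {ι 𝕜 F : Type*} [Fintype ι] [DecidableEq ι] [NontriviallyNormedField 𝕜]
  [NormedAddCommGroup F] [NormedSpace 𝕜 F]

theorem ContinuousLinearMap.norm_sum_proj_smulRight_sub_le (c : ι → F) (A : (ι → 𝕜) →L[𝕜] F) :
    ‖∑ j, (proj j : (ι → 𝕜) →L[𝕜] 𝕜).smulRight (c j) - A‖ ≤ ∑ j, ‖c j - A (Pi.single j 1)‖ := by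
  refine opNorm_le_bound _ (by positivity) fun v => ?_
  have hA : A v = ∑ j, v j • A (Pi.single j 1) := by
    simp only [← map_smul, ← map_sum]
    congr 1
    ext i
    simp [Pi.single_apply]
  calc ‖(∑ j, (proj j : (ι → 𝕜) →L[𝕜] 𝕜).smulRight (c j) - A) v‖
      = ‖∑ j, v j • (c j - A (Pi.single j 1))‖ := by
        simp [hA, smul_sub, Finset.sum_sub_distrib]
    _ ≤ ∑ j, ‖v‖ * ‖c j - A (Pi.single j 1)‖ := by
        refine (norm_sum_le _ _).trans (Finset.sum_le_sum fun j _ => ?_)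
        rw [norm_smul]
        gcongr
        exact norm_le_pi_norm v j
    _ = (∑ j, ‖c j - A (Pi.single j 1)‖) * ‖v‖ := by rw [← Finset.mul_sum, mul_comm]

end ColumnOperators

theorem norm_FD_sub_fderiv_le {r : ℕ} {f : (Fin r → ℂ) → (Fin r → ℂ)} {η : ℝ} {x : Fin r → ℂ}
    {s : Set (Fin r → ℂ)} {C : ℝ} (hs : Convex ℝ s) (hf : ∀ z ∈ s, ContDiffAt ℂ 2 f z)
    (bound : ∀ z ∈ s, ‖iteratedFDeriv ℂ 2 f z‖ ≤ C) (hη : 0 < η)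
    (hxs : Metric.closedBall x η ⊆ s) :
    ‖FD r f η x - fderiv ℂ f x‖ ≤ r * (C / 2 * η) := by
  have hηC : (η : ℂ) ≠ 0 := by exact_mod_cast hη.ne'
  have hnorm_step : ∀ j : Fin r, ‖(η : ℂ) • (Pi.single j 1 : Fin r → ℂ)‖ = η := fun j => by
    rw [norm_smul, Complex.norm_real, Pi.norm_single, norm_one, mul_one, Real.norm_of_nonneg hη.le]
  have hcol : ∀ j : Fin r, ‖(η : ℂ)⁻¹ • (f (x + (η : ℂ) • Pi.single j 1) - f x) -
      fderiv ℂ f x (Pi.single j 1)‖ ≤ C / 2 * η := fun j => by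
    have hTaylor := hs.norm_image_sub_sub_fderiv_le_of_norm_iteratedFDeriv_two_le hf bound
      (hxs (Metric.mem_closedBall_self hη.le))
      (hxs (by rw [Metric.mem_closedBall, dist_eq_norm, add_sub_cancel_left, hnorm_step j]))
    rw [add_sub_cancel_left, hnorm_step j] at hTaylor
    have hcolumn : (η : ℂ)⁻¹ • (f (x + (η : ℂ) • Pi.single j 1) - f x) -
        fderiv ℂ f x (Pi.single j 1) = (η : ℂ)⁻¹ • (f (x + (η : ℂ) • Pi.single j 1) - f x -
          fderiv ℂ f x ((η : ℂ) • Pi.single j 1)) := by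
      rw [map_smul, smul_sub (η : ℂ)⁻¹ _ ((η : ℂ) • _), smul_smul, inv_mul_cancel₀ hηC, one_smul]
    rw [hcolumn, norm_smul, norm_inv, Complex.norm_real, Real.norm_of_nonneg hη.le]
    calc η⁻¹ * ‖f (x + (η : ℂ) • Pi.single j 1) - f x - fderiv ℂ f x ((η : ℂ) • Pi.single j 1)‖
        ≤ η⁻¹ * (C / 2 * η ^ 2) := by gcongr
      _ = C / 2 * η := by field_simp
  calc ‖FD r f η x - fderiv ℂ f x‖ ≤ ∑ _j : Fin r, C / 2 * η :=
        (ContinuousLinearMap.norm_sum_proj_smulRight_sub_le _ _).trans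
          (Finset.sum_le_sum fun j _ => hcol j)
    _ = r * (C / 2 * η) := by simp

section Newton

variable {𝕜 E : Type*} [NontriviallyNormedField 𝕜] [NormedAddCommGroup E] [NormedSpace 𝕜 E]

theorem norm_newton_step_sub_le {L A D : E →L[𝕜] E} (hLA : L * A = 1) (f : E → E) (x x₀ : E) :
    ‖x + L (f x₀ - f x) - x₀‖ ≤ ‖L‖ * (‖A - D‖ * ‖x - x₀‖ + ‖f x₀ - f x - D (x₀ - x)‖) := by
  have hLAv : ∀ v, L (A v) = v := fun v => by
    simpa using congrArg (fun M : E →L[𝕜] E => M v) hLA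
  have hresidual : x + L (f x₀ - f x) - x₀ =
      L ((A - D) (x - x₀) + (f x₀ - f x - D (x₀ - x))) := by
    calc x + L (f x₀ - f x) - x₀ = L (A (x - x₀)) + L (f x₀ - f x) := by rw [hLAv]; abel
      _ = _ := by
        rw [← map_add, ← neg_sub x x₀, map_neg, sub_apply]
        abel_nf
  rw [hresidual]
  calc ‖L ((A - D) (x - x₀) + (f x₀ - f x - D (x₀ - x)))‖
      ≤ ‖L‖ * (‖(A - D) (x - x₀)‖ + ‖f x₀ - f x - D (x₀ - x)‖) :=
        (L.le_opNorm _).trans (by gcongr; exact norm_add_le _ _)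
    _ ≤ _ := by gcongr; exact (A - D).le_opNorm _

theorem exists_unit_and_norm_newton_step_le [CompleteSpace E] [Nontrivial E]
    (u₀ : (E →L[𝕜] E)ˣ) {A D : E →L[𝕜] E} {f : E → E} {x x₀ : E} {B a b c q : ℝ}
    (hu₀ : ‖(↑u₀⁻¹ : E →L[𝕜] E)‖ ≤ B) (hD : ‖↑u₀ - D‖ ≤ a) (hA : ‖A - D‖ ≤ b)
    (hT : ‖f x₀ - f x - D (x₀ - x)‖ ≤ c) (hq : B * (a + b) ≤ q) (hq1 : q < 1) :
    ∃ v : (E →L[𝕜] E)ˣ, ↑v = A ∧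
      ‖x + (↑v⁻¹ : E →L[𝕜] E) (f x₀ - f x) - x₀‖ ≤ B / (1 - q) * (b * ‖x - x₀‖ + c) := by
  have hpert : ‖(↑u₀⁻¹ : E →L[𝕜] E) * (↑u₀ - A)‖ ≤ q :=
    calc ‖(↑u₀⁻¹ : E →L[𝕜] E) * (↑u₀ - A)‖
        ≤ ‖(↑u₀⁻¹ : E →L[𝕜] E)‖ * (‖↑u₀ - D‖ + ‖D - A‖) :=
          (norm_mul_le _ _).trans (by gcongr; exact norm_sub_le_norm_sub_add_norm_sub _ _ _)
      _ ≤ B * (a + b) := by rw [norm_sub_rev D]; gcongr; exact (norm_nonneg _).trans hu₀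
      _ ≤ q := hq
  obtain ⟨v, hv, hvnorm⟩ := u₀.exists_val_eq_and_norm_inv_le A hpert hq1
  have hvA : (↑v⁻¹ : E →L[𝕜] E) * A = 1 := by rw [← hv]; exact v.inv_mul
  refine ⟨v, hv, (norm_newton_step_sub_le (D := D) hvA f x x₀).trans ?_⟩
  have hB : 0 ≤ B := (norm_nonneg _).trans hu₀
  gcongr
  exact hvnorm.trans (by gcongr)

end Newton

theorem pos_and_step_le_of_le_div {r : ℕ} {ε η B₁ B₃ : ℝ} (hη : 0 < η) (hB₁ : 1 ≤ B₁)
    (hB₃ : 1 ≤ B₃) (hη' : η ≤ ε / (4 * r * B₁ * B₃)) :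
    0 < r ∧ η ≤ ε / 4 ∧ r * η * B₃ ≤ ε / 4 := by
  have hr : 0 < r := by
    rcases Nat.eq_zero_or_pos r with rfl | hr
    · -- for `r = 0` the hypothesis reads `η ≤ ε / 0 = 0`
      simp at hη'; linarith
    · exact hr
  have hr1 : (1 : ℝ) ≤ r := by exact_mod_cast hr
  rw [le_div_iff₀ (by positivity)] at hη'
  have hrη : r * η * B₃ ≤ ε / 4 := by
    nlinarith [mul_le_mul_of_nonneg_left hB₁ (by positivity : (0:ℝ) ≤ r * η * B₃)]
  refine ⟨hr, ?_, hrη⟩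
  nlinarith [mul_le_mul hr1 hB₃ zero_le_one (by positivity)]

theorem statement0_general (r : ℕ) (U : Set (Fin r → ℂ))
    (f : (Fin r → ℂ) → (Fin r → ℂ)) (hf : AnalyticOnNhd ℂ f U)
    (x₀ : Fin r → ℂ)
    (ρ : ℝ) (B₁ B₂ B₃ : ℝ) (hB₁ : 1 ≤ B₁) (hB₂ : 1 ≤ B₂) (hB₃ : 1 ≤ B₃)
    (hball : Metric.ball x₀ ρ ⊆ U)
    (hd2 : ∀ x ∈ Metric.ball x₀ ρ, ‖iteratedFDeriv ℂ 2 f x‖ ≤ B₂)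
    (L₀ : (Fin r → ℂ) →L[ℂ] (Fin r → ℂ))
    (hL₀l : L₀.comp (fderiv ℂ f x₀) = ContinuousLinearMap.id ℂ (Fin r → ℂ))
    (hL₀r : (fderiv ℂ f x₀).comp L₀ = ContinuousLinearMap.id ℂ (Fin r → ℂ))
    (hL₀norm : ‖L₀‖ ≤ B₃)
    (ε η : ℝ) (hε : 0 < ε) (hη : 0 < η)
    (hε' : ε ≤ min (ρ / 2) (1 / (2 * B₂ * B₃))) (hη' : η ≤ ε / (4 * r * B₁ * B₃))
    (x : Fin r → ℂ) (hx : ‖x - x₀‖ ≤ ε) :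
    ∃ L : (Fin r → ℂ) →L[ℂ] (Fin r → ℂ),
      L.comp (FD r f η x) = ContinuousLinearMap.id ℂ (Fin r → ℂ) ∧
      (FD r f η x).comp L = ContinuousLinearMap.id ℂ (Fin r → ℂ) ∧
      ‖x + L (f x₀ - f x) - x₀‖ ≤ 2 * B₂ * B₃ * ε ^ 2 := by
  obtain ⟨hr, hηε, hrη⟩ := pos_and_step_le_of_le_div hη hB₁ hB₃ hη'
  have : NeZero r := ⟨hr.ne'⟩
  have hB₂0 : 0 ≤ B₂ := by linarith
  have hε₁ : ε ≤ ρ / 2 := hε'.trans (min_le_left _ _)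
  have hε₂ : 2 * B₂ * B₃ * ε ≤ 1 := by
    have := hε'.trans (min_le_right _ _)
    rwa [le_div_iff₀ (by positivity), mul_comm] at this
  have hC2 : ∀ z ∈ Metric.ball x₀ ρ, ContDiffAt ℂ 2 f z := fun z hz => (hf z (hball hz)).contDiffAt
  have hx₀s : x₀ ∈ Metric.ball x₀ ρ := Metric.mem_ball_self (by linarith)
  have hxs : x ∈ Metric.ball x₀ ρ := by rw [Metric.mem_ball, dist_eq_norm]; linarith
  have hFD := norm_FD_sub_fderiv_le (convex_ball x₀ ρ) hC2 hd2 hη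
    (Metric.closedBall_subset_ball' (by rw [dist_eq_norm]; linarith))
  have hD : ‖fderiv ℂ f x₀ - fderiv ℂ f x‖ ≤ B₂ * ε :=
    ((convex_ball x₀ ρ).norm_fderiv_sub_le_of_norm_iteratedFDeriv_two_le hC2 hd2 hxs hx₀s).trans
      (by rw [norm_sub_rev]; gcongr)
  have hT : ‖f x₀ - f x - fderiv ℂ f x (x₀ - x)‖ ≤ B₂ / 2 * ε ^ 2 :=
    ((convex_ball x₀ ρ).norm_image_sub_sub_fderiv_le_of_norm_iteratedFDeriv_two_le
      hC2 hd2 hxs hx₀s).trans (by rw [norm_sub_rev]; gcongr)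
  have hq : B₃ * (B₂ * ε + r * (B₂ / 2 * η)) ≤ 9 / 16 := by
    nlinarith [mul_le_mul_of_nonneg_left hrη (by linarith : 0 ≤ B₂ / 2),
      mul_le_mul_of_nonneg_left hB₃ (mul_nonneg hB₂0 hε.le)]
  obtain ⟨v, hv, hnewton⟩ := exists_unit_and_norm_newton_step_le ⟨fderiv ℂ f x₀, L₀, hL₀r, hL₀l⟩
    hL₀norm hD hFD hT hq (by norm_num)
  refine ⟨↑v⁻¹, by rw [← hv]; exact v.inv_mul, by rw [← hv]; exact v.mul_inv, hnewton.trans ?_⟩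
  calc B₃ / (1 - 9 / 16) * (r * (B₂ / 2 * η) * ‖x - x₀‖ + B₂ / 2 * ε ^ 2)
      ≤ B₃ / (1 - 9 / 16) * (r * (B₂ / 2 * η) * ε + B₂ / 2 * ε ^ 2) := by gcongr
    _ = 16 / 7 * (B₂ / 2 * ε * (r * η * B₃) + B₂ * B₃ * ε ^ 2 / 2) := by ring
    _ ≤ 16 / 7 * (B₂ / 2 * ε * (ε / 4) + B₂ * B₃ * ε ^ 2 / 2) := by gcongr
    _ ≤ 2 * B₂ * B₃ * ε ^ 2 := by
        nlinarith [mul_le_mul_of_nonneg_left hB₃ (by positivity : 0 ≤ B₂ * ε ^ 2)]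

theorem statement0 (r : ℕ) (U : Set (Fin r → ℂ)) (hU : IsOpen U)
    (f : (Fin r → ℂ) → (Fin r → ℂ)) (hf : AnalyticOnNhd ℂ f U)
    (x₀ : Fin r → ℂ) (hx₀ : x₀ ∈ U)
    (ρ : ℝ) (hρ : 0 < ρ) (B₁ B₂ B₃ : ℝ) (hB₁ : 1 ≤ B₁) (hB₂ : 1 ≤ B₂) (hB₃ : 1 ≤ B₃)
    (hball : Metric.ball x₀ ρ ⊆ U)
    (hd1 : ∀ x ∈ Metric.ball x₀ ρ, ‖fderiv ℂ f x‖ ≤ B₁)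
    (hd2 : ∀ x ∈ Metric.ball x₀ ρ, ‖iteratedFDeriv ℂ 2 f x‖ ≤ B₂)
    (L₀ : (Fin r → ℂ) →L[ℂ] (Fin r → ℂ))
    (hL₀l : L₀.comp (fderiv ℂ f x₀) = ContinuousLinearMap.id ℂ (Fin r → ℂ))
    (hL₀r : (fderiv ℂ f x₀).comp L₀ = ContinuousLinearMap.id ℂ (Fin r → ℂ))
    (hL₀norm : ‖L₀‖ ≤ B₃)
    (ε η : ℝ) (hε : 0 < ε) (hη : 0 < η)
    (hε' : ε ≤ min (ρ / 2) (1 / (2 * B₂ * B₃))) (hη' : η ≤ ε / (4 * r * B₁ * B₃))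
    (x : Fin r → ℂ) (hx : ‖x - x₀‖ ≤ ε) :
    ∃ L : (Fin r → ℂ) →L[ℂ] (Fin r → ℂ),
      L.comp (FD r f η x) = ContinuousLinearMap.id ℂ (Fin r → ℂ) ∧
      (FD r f η x).comp L = ContinuousLinearMap.id ℂ (Fin r → ℂ) ∧
      ‖x + L (f x₀ - f x) - x₀‖ ≤ 2 * B₂ * B₃ * ε ^ 2 :=
  statement0_general r U f hf x₀ ρ B₁ B₂ B₃ hB₁ hB₂ hB₃ hball hd2 L₀ hL₀l hL₀r hL₀norm ε η hε hη hε'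
    hη' x hx
end

section
/- Let r, s ≥ 1, x₀ ∈ ℂ^r, ρ > 0, and let f : D_ρ(x₀) → ℂ^s be an analytic function. Let M ≥ 0 be such that ‖f(x)‖ ≤ M for all x ∈ D_ρ(x₀). Then for every integer n ≥ 0 and every x ∈ D_{ρ/2}(x₀), the n-th derivative of f at x (a symmetric n-multilinear map ℂ^r × ⋯ × ℂ^r → ℂ^s) satisfies ‖dⁿf(x)‖ ≤ (2ⁿ n!/ρⁿ) · C(n+r, r) · M, where C(n+r, r) is the binomial coefficient. -/
/-!
Put `δ = ρ/2`, so that `f` is analytic and bounded by `M` on the polydisk `D_δ(x)`. Partial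
derivatives of an analytic function commute, so `∂^α f(x)` may be taken one coordinate at a time.
By induction on the coordinates `k₁, …, kⱼ` already differentiated, `∂_{k₁}^{α₁} ⋯ ∂_{kⱼ}^{αⱼ} f`
is bounded by `M ∏ αᵢ! / δ^{αᵢ}` at every point `y` of the polydisk with `y_{kᵢ} = x_{kᵢ}`:
the complex line through such a `y` in direction `k₁` meets the polydisk in a full disk of
radius `δ`, along which the coordinates `k₂, …, kⱼ` stay fixed, so the one-variable Cauchy
estimate applies. Expanding `dⁿf(x)` in the standard basis gives
`‖dⁿf(x)‖ ≤ ∑_{v : Fin n → Fin r} α(v)! M / δⁿ`, where `α(v)` counts how often each coordinate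
occurs in `v`, and this sum of factorials is `r (r+1) ⋯ (r+n-1) ≤ n! C(n+r, r)`.
-/

open Metric Set Filter Topology
open scoped Nat ContDiff

section Counting

variable {ι : Type*} [Fintype ι] [DecidableEq ι]

lemma List.sum_count_eq_length (l : List ι) : ∑ k, l.count k = l.length := by
  simpa [Multiset.coe_count] using
    Multiset.sum_count_eq_card (s := Finset.univ) (m := (l : Multiset ι)) (fun a _ => by simp)

lemma count_univ_toList_flatMap_replicate (α : ι → ℕ) (k : ι) :
    (Finset.univ.toList.flatMap fun m => List.replicate (α m) m).count k = α k := by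
  simp [List.count_flatMap, Function.comp_def, List.count_replicate, Finset.sum_map_toList]

lemma List.prod_factorial_count_cons (a : ι) (l : List ι) :
    ∏ k, ((a :: l).count k)! = (l.count a + 1) * ∏ k, (l.count k)! := by
  have hcons : ∀ k,
      ((a :: l).count k)! = (if a = k then l.count a + 1 else 1) * (l.count k)! := by
    intro k
    by_cases h : a = k
    · subst h
      simp [List.count_cons_self, Nat.factorial_succ]
    · simp [h]
  rw [Finset.prod_congr rfl fun k _ => hcons k, Finset.prod_mul_distrib, Finset.prod_ite_eq]
  simp

theorem sum_prod_factorial_count_ofFn (n : ℕ) :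
    ∑ v : Fin n → ι, ∏ k, ((List.ofFn v).count k)! = (Fintype.card ι).ascFactorial n := by
  induction n with
  | zero => simp
  | succ n ih =>
    rw [← (Fin.consEquiv fun _ => ι).sum_comp, Fintype.sum_prod_type, Finset.sum_comm]
    simp only [Fin.consEquiv, Equiv.coe_fn_mk, List.ofFn_succ, Fin.cons_zero, Fin.cons_succ,
      List.prod_factorial_count_cons, ← Finset.sum_mul, Finset.sum_add_distrib,
      List.sum_count_eq_length, List.length_ofFn]
    simp [← Finset.mul_sum, ih, Nat.ascFactorial_succ, add_comm]

lemma ascFactorial_le_factorial_mul_choose (r n : ℕ) :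
    r.ascFactorial n ≤ n ! * (n + r).choose r := by
  rw [Nat.ascFactorial_eq_factorial_mul_choose', ← Nat.choose_symm_add, add_comm n r]
  exact Nat.mul_le_mul_left _ (Nat.choose_le_choose n (Nat.sub_le _ _))

end Counting

lemma ContinuousMultilinearMap.norm_le_sum_norm_apply_single {𝕜 ι G : Type*}
    [NontriviallyNormedField 𝕜] [Fintype ι] [DecidableEq ι] [NormedAddCommGroup G]
    [NormedSpace 𝕜 G] {n : ℕ} (D : ContinuousMultilinearMap 𝕜 (fun _ : Fin n => ι → 𝕜) G) :
    ‖D‖ ≤ ∑ v : Fin n → ι, ‖D fun i => Pi.single (v i) 1‖ := by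
  refine D.opNorm_le_bound (by positivity) fun m => ?_
  have hexpand : D m = ∑ v : Fin n → ι, (∏ i, m i (v i)) • D fun i => Pi.single (v i) 1 := by
    conv_lhs => rw [show m = fun i => ∑ j, m i j • Pi.single j 1 by
      ext i k; simp [Pi.single_apply]]
    rw [← D.coe_coe, D.toMultilinearMap.map_sum]
    simp only [MultilinearMap.map_smul_univ]
  rw [hexpand, Finset.sum_mul]
  refine (norm_sum_le _ _).trans (Finset.sum_le_sum fun v _ => ?_)
  rw [norm_smul, norm_prod, mul_comm]
  gcongr with i
  exact norm_le_pi_norm (m i) (v i)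

variable {F : Type*} [NormedAddCommGroup F] [NormedSpace ℂ F]

theorem Complex.norm_iteratedDeriv_le_of_forall_mem_ball_norm_le [CompleteSpace F] {c : ℂ}
    {R C : ℝ} {h : ℂ → F} (m : ℕ) (hR : 0 < R) (hh : DifferentiableOn ℂ h (ball c R))
    (hC : ∀ z ∈ ball c R, ‖h z‖ ≤ C) :
    ‖iteratedDeriv m h c‖ ≤ m ! * C / R ^ m := by
  have hbound : ∀ t ∈ Ioo 0 R, ‖iteratedDeriv m h c‖ ≤ m ! * C / t ^ m := fun t ht =>
    norm_iteratedDeriv_le_of_forall_mem_sphere_norm_le m ht.1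
      (hh.diffContOnCl_ball (closedBall_subset_ball ht.2))
      fun z hz => hC z (closedBall_subset_ball ht.2 (sphere_subset_closedBall hz))
  have hlim : Tendsto (fun t : ℝ => m ! * C / t ^ m) (𝓝[<] R) (𝓝 (m ! * C / R ^ m)) :=
    ((continuousAt_const.div (continuousAt_id.pow m) (pow_ne_zero m hR.ne')).tendsto).mono_left
      nhdsWithin_le_nhds
  exact ge_of_tendsto hlim (eventually_of_mem (Ioo_mem_nhdsLT hR) hbound)

section PartialDeriv

variable {ι : Type*} [DecidableEq ι]

noncomputable def partialDeriv (k : ι) (g : (ι → ℂ) → F) : (ι → ℂ) → F :=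
  fun y => fderiv ℂ g y (Pi.single k 1)

/-- `iteratedPartialDeriv [k₁, …, kₙ] g = ∂_{k₁} ⋯ ∂_{kₙ} g`. -/
noncomputable def iteratedPartialDeriv : List ι → ((ι → ℂ) → F) → (ι → ℂ) → F
  | [], g => g
  | k :: l, g => partialDeriv k (iteratedPartialDeriv l g)

lemma iteratedPartialDeriv_append (l₁ l₂ : List ι) (g : (ι → ℂ) → F) :
    iteratedPartialDeriv (l₁ ++ l₂) g = iteratedPartialDeriv l₁ (iteratedPartialDeriv l₂ g) := by
  induction l₁ with
  | nil => rfl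
  | cons k l ih => simp only [List.cons_append, iteratedPartialDeriv, ih]

variable [Fintype ι] [CompleteSpace F] {g : (ι → ℂ) → F} {y : ι → ℂ}

lemma analyticAt_partialDeriv (hg : AnalyticAt ℂ g y) (k : ι) :
    AnalyticAt ℂ (partialDeriv k g) y :=
  let evalAt : ((ι → ℂ) →L[ℂ] F) →L[ℂ] F := ContinuousLinearMap.apply ℂ F (Pi.single k 1)
  (evalAt.analyticAt _).comp hg.fderiv

lemma analyticAt_iteratedPartialDeriv (hg : AnalyticAt ℂ g y) (l : List ι) :
    AnalyticAt ℂ (iteratedPartialDeriv l g) y := by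
  induction l with
  | nil => exact hg
  | cons k l ih => exact analyticAt_partialDeriv ih k

lemma partialDeriv_comm (hg : AnalyticAt ℂ g y) (a b : ι) :
    partialDeriv a (partialDeriv b g) y = partialDeriv b (partialDeriv a g) y := by
  have hsymm : IsSymmSndFDerivAt ℂ g y := (hg.contDiffAt (n := ω)).isSymmSndFDerivAt_of_omega
  have happly : ∀ v w : ι → ℂ,
      fderiv ℂ (fun z => fderiv ℂ g z w) y v = fderiv ℂ (fderiv ℂ g) y v w := fun v w => by
    simp [fderiv_clm_apply hg.fderiv.differentiableAt (differentiableAt_const w)]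
  unfold partialDeriv
  rw [happly, happly, hsymm.eq]

lemma iteratedPartialDeriv_perm {l₁ l₂ : List ι} (h : l₁.Perm l₂)
    (hg : AnalyticAt ℂ g y) :
    iteratedPartialDeriv l₁ g y = iteratedPartialDeriv l₂ g y := by
  induction h generalizing y with
  | nil => rfl
  | cons k _ ih =>
    simp only [iteratedPartialDeriv, partialDeriv]
    rw [Filter.EventuallyEq.fderiv_eq (hg.eventually_analyticAt.mono fun z hz => ih hz)]
  | swap a b l => exact partialDeriv_comm (analyticAt_iteratedPartialDeriv hg l) b a
  | trans _ _ ih₁ ih₂ => exact (ih₁ hg).trans (ih₂ hg)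

lemma iteratedFDeriv_apply_single {n : ℕ} (hg : AnalyticAt ℂ g y) (v : Fin n → ι) :
    iteratedFDeriv ℂ n g y (fun i => Pi.single (v i) 1) =
      iteratedPartialDeriv (List.ofFn v) g y := by
  induction n generalizing y with
  | zero => simp [iteratedPartialDeriv]
  | succ n ih =>
    have hdiff : DifferentiableAt ℂ (iteratedFDeriv ℂ n g) y :=
      (hg.contDiffAt (n := ω)).differentiableAt_iteratedFDeriv (WithTop.coe_lt_top _)
    have hev : (fun z => iteratedFDeriv ℂ n g z fun i => Pi.single (v i.succ) 1)
        =ᶠ[𝓝 y] iteratedPartialDeriv (List.ofFn fun i => v i.succ) g :=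
      hg.eventually_analyticAt.mono fun z hz => ih hz _
    rw [iteratedFDeriv_succ_apply_left, List.ofFn_succ, iteratedPartialDeriv, partialDeriv,
      ← hev.fderiv_eq, fderiv_continuousMultilinear_apply_const_apply hdiff]
    rfl

end PartialDeriv

section Polydisk

variable {ι : Type*} [Fintype ι] [DecidableEq ι] [CompleteSpace F]

lemma add_smul_single_mem_ball {x y : ι → ℂ} {k : ι} {δ : ℝ} {z : ℂ} (hy : y ∈ ball x δ)
    (hyk : y k = x k) (hz : z ∈ ball (0 : ℂ) δ) : y + z • Pi.single k 1 ∈ ball x δ := by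
  rw [mem_ball, dist_pi_lt_iff (pos_of_mem_ball hy)]
  intro i
  by_cases hik : i = k
  · subst hik
    simpa [hyk] using hz
  · simpa [hik] using dist_le_pi_dist y x i |>.trans_lt hy

lemma iteratedDeriv_comp_add_smul_single {h : (ι → ℂ) → F} {y : ι → ℂ} {k : ι} {U : Set ℂ}
    (hU : IsOpen U) (hh : ∀ z ∈ U, AnalyticAt ℂ h (y + z • Pi.single k 1)) (m : ℕ) :
    EqOn (iteratedDeriv m fun z => h (y + z • Pi.single k 1))
      (fun z => iteratedPartialDeriv (List.replicate m k) h (y + z • Pi.single k 1)) U := by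
  induction m with
  | zero => intro z _; rfl
  | succ m ih =>
    intro z hz
    have hline : HasDerivAt (fun w : ℂ => y + w • Pi.single k (1 : ℂ)) (Pi.single k 1) z := by
      simpa using ((hasDerivAt_id z).smul_const (Pi.single k (1 : ℂ))).const_add y
    have hcomp := (analyticAt_iteratedPartialDeriv (hh z hz) (List.replicate m k)
      ).differentiableAt.hasFDerivAt.comp_hasDerivAt z hline
    rw [iteratedDeriv_succ, (eventuallyEq_of_mem (hU.mem_nhds hz) ih).deriv_eq]
    exact hcomp.deriv

lemma norm_iteratedPartialDeriv_replicate_le {h : (ι → ℂ) → F} {y : ι → ℂ} {k : ι} {δ C : ℝ}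
    (hδ : 0 < δ) (hh : ∀ z ∈ ball (0 : ℂ) δ, AnalyticAt ℂ h (y + z • Pi.single k 1))
    (hC : ∀ z ∈ ball (0 : ℂ) δ, ‖h (y + z • Pi.single k 1)‖ ≤ C) (m : ℕ) :
    ‖iteratedPartialDeriv (List.replicate m k) h y‖ ≤ m ! * C / δ ^ m := by
  have hdiff : DifferentiableOn ℂ (fun z => h (y + z • Pi.single k 1))
      (ball (0 : ℂ) δ) := fun z hz =>
    ((hh z hz).differentiableAt.comp z (by fun_prop)).differentiableWithinAt
  simpa [iteratedDeriv_comp_add_smul_single isOpen_ball hh m (mem_ball_self hδ)] using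
    Complex.norm_iteratedDeriv_le_of_forall_mem_ball_norm_le m hδ hdiff hC

variable {g : (ι → ℂ) → F} {x : ι → ℂ} {δ C : ℝ}

lemma norm_iteratedPartialDeriv_flatMap_replicate_le (hδ : 0 < δ)
    (hg : AnalyticOnNhd ℂ g (ball x δ)) (hC : ∀ y ∈ ball x δ, ‖g y‖ ≤ C) (α : ι → ℕ)
    {l : List ι} (hl : l.Nodup) {y : ι → ℂ} (hy : y ∈ ball x δ) (hyl : ∀ k ∈ l, y k = x k) :
    ‖iteratedPartialDeriv (l.flatMap fun k => List.replicate (α k) k) g y‖ ≤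
      C * (l.map fun k => ((α k)! : ℝ) / δ ^ α k).prod := by
  induction l generalizing y with
  | nil => simpa [iteratedPartialDeriv] using hC y hy
  | cons k l ih =>
    obtain ⟨hkl, hl⟩ := List.nodup_cons.1 hl
    have hline : ∀ z ∈ ball (0 : ℂ) δ, y + z • Pi.single k 1 ∈ ball x δ := fun z hz =>
      add_smul_single_mem_ball hy (hyl k List.mem_cons_self) hz
    have hfixed : ∀ (z : ℂ), ∀ j ∈ l, (y + z • Pi.single k 1 : ι → ℂ) j = x j :=
      fun z j hj => by simp [ne_of_mem_of_not_mem hj hkl, hyl j (List.mem_cons_of_mem k hj)]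
    have hbound := norm_iteratedPartialDeriv_replicate_le hδ
      (fun z hz => analyticAt_iteratedPartialDeriv (hg _ (hline z hz)) _)
      (fun z hz => ih hl (hline z hz) (hfixed z)) (α k)
    rw [List.flatMap_cons, iteratedPartialDeriv_append, List.map_cons, List.prod_cons]
    exact hbound.trans_eq (by ring)

lemma norm_iteratedFDeriv_apply_single_le (hδ : 0 < δ) (hg : AnalyticOnNhd ℂ g (ball x δ))
    (hC : ∀ y ∈ ball x δ, ‖g y‖ ≤ C) {n : ℕ} (v : Fin n → ι) :
    ‖iteratedFDeriv ℂ n g x (fun i => Pi.single (v i) 1)‖ ≤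
      (∏ k, ((List.ofFn v).count k)! : ℕ) * C / δ ^ n := by
  set α : ι → ℕ := fun k => (List.ofFn v).count k
  have hsorted :
      (List.ofFn v).Perm (Finset.univ.toList.flatMap fun k => List.replicate (α k) k) :=
    List.perm_iff_count.2 fun k => (count_univ_toList_flatMap_replicate α k).symm
  have hx := hg x (mem_ball_self hδ)
  rw [iteratedFDeriv_apply_single hx, iteratedPartialDeriv_perm hsorted hx]
  refine (norm_iteratedPartialDeriv_flatMap_replicate_le hδ hg hC α (Finset.nodup_toList _)
    (mem_ball_self hδ) fun _ _ => rfl).trans_eq ?_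
  rw [Finset.prod_map_toList, Finset.prod_div_distrib, Finset.prod_pow_eq_pow_sum,
    List.sum_count_eq_length, List.length_ofFn]
  push_cast
  ring

theorem norm_iteratedFDeriv_le_of_forall_mem_ball_norm_le (hδ : 0 < δ)
    (hg : AnalyticOnNhd ℂ g (ball x δ)) (hC : ∀ y ∈ ball x δ, ‖g y‖ ≤ C) (n : ℕ) :
    ‖iteratedFDeriv ℂ n g x‖ ≤ (Fintype.card ι).ascFactorial n * C / δ ^ n :=
  calc ‖iteratedFDeriv ℂ n g x‖
      ≤ ∑ v : Fin n → ι, ‖iteratedFDeriv ℂ n g x fun i => Pi.single (v i) 1‖ :=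
        ContinuousMultilinearMap.norm_le_sum_norm_apply_single _
    _ ≤ ∑ v : Fin n → ι, (∏ k, ((List.ofFn v).count k)! : ℕ) * C / δ ^ n :=
        Finset.sum_le_sum fun v _ => norm_iteratedFDeriv_apply_single_le hδ hg hC v
    _ = (Fintype.card ι).ascFactorial n * C / δ ^ n := by
        rw [← Finset.sum_div, ← Finset.sum_mul, ← Nat.cast_sum, sum_prod_factorial_count_ofFn]

end Polydisk

theorem statement1_general (r s : ℕ)
    (x₀ : Fin r → ℂ) (ρ : ℝ) (hρ : 0 < ρ)
    (f : (Fin r → ℂ) → (Fin s → ℂ)) (hf : AnalyticOnNhd ℂ f (Metric.ball x₀ ρ))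
    (M : ℝ) (hfM : ∀ x ∈ Metric.ball x₀ ρ, ‖f x‖ ≤ M)
    (n : ℕ) (x : Fin r → ℂ) (hx : x ∈ Metric.ball x₀ (ρ / 2)) :
    ‖iteratedFDeriv ℂ n f x‖ ≤
      2 ^ n * (n.factorial : ℝ) / ρ ^ n * ((n + r).choose r : ℝ) * M := by
  have hsub : ball x (ρ / 2) ⊆ ball x₀ ρ := ball_subset_ball' (by linarith [mem_ball.1 hx])
  have hM : 0 ≤ M := (norm_nonneg _).trans (hfM x (hsub (mem_ball_self (half_pos hρ))))
  have hcauchy := norm_iteratedFDeriv_le_of_forall_mem_ball_norm_le (half_pos hρ)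
    (hf.mono hsub) (fun y hy => hfM y (hsub hy)) n
  have hcount : (r.ascFactorial n : ℝ) ≤ n ! * (n + r).choose r := by
    exact_mod_cast ascFactorial_le_factorial_mul_choose r n
  rw [Fintype.card_fin] at hcauchy
  calc ‖iteratedFDeriv ℂ n f x‖ ≤ r.ascFactorial n * M / (ρ / 2) ^ n := hcauchy
    _ ≤ n ! * (n + r).choose r * M / (ρ / 2) ^ n := by gcongr
    _ = 2 ^ n * (n.factorial : ℝ) / ρ ^ n * ((n + r).choose r : ℝ) * M := by
      rw [div_pow]
      field_simp

theorem statement1 (r s : ℕ) (hr : 1 ≤ r) (hs : 1 ≤ s)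
    (x₀ : Fin r → ℂ) (ρ : ℝ) (hρ : 0 < ρ)
    (f : (Fin r → ℂ) → (Fin s → ℂ)) (hf : AnalyticOnNhd ℂ f (Metric.ball x₀ ρ))
    (M : ℝ) (hM : 0 ≤ M) (hfM : ∀ x ∈ Metric.ball x₀ ρ, ‖f x‖ ≤ M)
    (n : ℕ) (x : Fin r → ℂ) (hx : x ∈ Metric.ball x₀ (ρ / 2)) :
    ‖iteratedFDeriv ℂ n f x‖ ≤
      2 ^ n * (n.factorial : ℝ) / ρ ^ n * ((n + r).choose r : ℝ) * M :=
  statement1_general r s x₀ ρ hρ f hf M hfM n x hx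
end

section
/- Let τ ∈ ℍ and z ∈ ℂ be such that |Im z| < 2 Im τ, and write q = exp(−π Im τ). Then for all b ∈ {0,1}: |θ_{0,b}(z, τ) − 1| < 2q·cosh(2π Im z) + 2q⁴·exp(4π|Im z|)/(1 − q⁵·exp(2π|Im z|)). Moreover, |θ_{1,0}(z, τ)/exp(iπτ/4) − (exp(iπz) + exp(−iπz))| < 2q²·exp(3π|Im z|)/(1 − q⁴·exp(2π|Im z|)). -/
/-!
Up to the factor `exp (-iπτ/4)` in the second case, both expansions are sums over `x ∈ ℤ + a/2`
of terms of modulus `exp (-π (x² Im τ + 2 x Im z))`. Grouping the terms at `x` and `-x` and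
using `|Im z| ≤ Y` bounds each group by `2 exp (-π (x² Im τ - 2 |x| Y))`. Beyond the groups that
are subtracted or computed exactly, at `x = x₀ + k`, this majorant is at most its value at `x₀`
times `r ^ k` with `r = exp (-π ((2 x₀ + 1) Im τ - 2 Y)) < 1`, because
`(x₀ + k)² - x₀² - (2 x₀ + 1) k = k (k - 1) ≥ 0`; the comparison is strict at `k = 2`, so the
tail is strictly smaller than the geometric sum.
-/

/-- The genus-1 theta function of characteristic `(a, b)`. -/
noncomputable def theta1 (a b : ℤ) (z τ : ℂ) : ℂ :=
  ∑' n : ℤ, Complex.exp ((Real.pi : ℂ) * Complex.I * ((n : ℂ) + (a : ℂ) / 2) ^ 2 * τ +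
    2 * (Real.pi : ℂ) * Complex.I * ((n : ℂ) + (a : ℂ) / 2) * (z + (b : ℂ) / 2))

open Complex Real

noncomputable def theta1Term (a b : ℤ) (z τ : ℂ) (n : ℤ) : ℂ :=
  cexp ((π : ℂ) * I * ((n : ℂ) + (a : ℂ) / 2) ^ 2 * τ +
    2 * (π : ℂ) * I * ((n : ℂ) + (a : ℂ) / 2) * (z + (b : ℂ) / 2))

lemma theta1Term_eq_mul_jacobiTheta₂_term (a b : ℤ) (z τ : ℂ) (n : ℤ) :
    theta1Term a b z τ n =
      cexp (π * I * ((a : ℂ) / 2) ^ 2 * τ + 2 * π * I * ((a : ℂ) / 2) * (z + b / 2)) *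
        jacobiTheta₂_term n (z + b / 2 + a / 2 * τ) τ := by
  rw [theta1Term, jacobiTheta₂_term, ← Complex.exp_add]
  congr 1
  ring

lemma hasSum_theta1Term (a b : ℤ) (z : ℂ) {τ : ℂ} (hτ : 0 < τ.im) :
    HasSum (theta1Term a b z τ) (theta1 a b z τ) := by
  refine Summable.hasSum ?_
  simp_rw [funext (theta1Term_eq_mul_jacobiTheta₂_term a b z τ)]
  exact ((summable_jacobiTheta₂_term_iff _ _).2 hτ).mul_left _

lemma norm_theta1Term (a b : ℤ) (z τ : ℂ) (n : ℤ) :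
    ‖theta1Term a b z τ n‖ =
      rexp (-π * ((n + a / 2 : ℝ) ^ 2 * τ.im + 2 * (n + a / 2 : ℝ) * z.im)) := by
  rw [theta1Term, Complex.norm_exp]
  congr 1
  simp only [sq, add_re, mul_re, ofReal_re, I_re, mul_zero, ofReal_im, I_im, mul_one, sub_self,
    intCast_re, div_ofNat_re, add_im, intCast_im, div_ofNat_im, zero_div, add_zero, sub_zero,
    zero_mul, mul_im, zero_add, zero_sub, re_ofNat, im_ofNat, neg_mul]
  ring

lemma exp_neg_pi_mul_pow_mul_exp (t s : ℝ) (n : ℕ) :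
    rexp (-π * t) ^ n * rexp s = rexp (-π * (n * t) + s) := by
  rw [← Real.exp_nat_mul, ← Real.exp_add]
  ring_nf

noncomputable def thetaMajorant (t Y x : ℝ) : ℝ := rexp (-π * (x ^ 2 * t - 2 * x * Y))

lemma exp_le_thetaMajorant (t x y : ℝ) :
    rexp (-π * (x ^ 2 * t + 2 * x * y)) ≤ thetaMajorant t |y| |x| := by
  refine Real.exp_le_exp.2 ?_
  rw [sq_abs]
  nlinarith [neg_abs_le (x * y), abs_mul x y, pi_pos]

lemma norm_theta1Term_add_theta1Term_neg_le (a b : ℤ) (z τ : ℂ) (n : ℤ) :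
    ‖theta1Term a b z τ n + theta1Term a b z τ (-n - a)‖ ≤
      2 * thetaMajorant τ.im |z.im| |n + a / 2| := by
  refine (norm_add_le _ _).trans ?_
  have hneg : ((-n - a : ℤ) : ℝ) + a / 2 = -(n + a / 2) := by push_cast; ring
  rw [norm_theta1Term, norm_theta1Term, hneg, ← abs_neg ((n : ℝ) + a / 2)]
  exact (add_le_add (abs_neg ((n : ℝ) + a / 2) ▸ exp_le_thetaMajorant _ _ _)
    (exp_le_thetaMajorant _ _ _)).trans_eq (two_mul _).symm

lemma thetaMajorant_mul_pow (t Y m : ℝ) (k : ℕ) :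
    thetaMajorant t Y m * rexp (-π * ((2 * m + 1) * t - 2 * Y)) ^ k =
      thetaMajorant t Y (k + m) * rexp (π * (k ^ 2 - k) * t) := by
  simp only [thetaMajorant, ← Real.exp_nat_mul, ← Real.exp_add]
  congr 1
  ring

lemma tsum_thetaMajorant_lt {t Y m : ℝ} (ht : 0 < t) (hY : 2 * Y < (2 * m + 1) * t) :
    Summable (fun k : ℕ ↦ thetaMajorant t Y (k + m)) ∧
      ∑' k : ℕ, thetaMajorant t Y (k + m) <
        thetaMajorant t Y m / (1 - rexp (-π * ((2 * m + 1) * t - 2 * Y))) := by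
  set r := rexp (-π * ((2 * m + 1) * t - 2 * Y))
  have hr1 : r < 1 := Real.exp_lt_one_iff.2 (by nlinarith [pi_pos])
  have hgeom : Summable (fun k : ℕ ↦ thetaMajorant t Y m * r ^ k) :=
    (summable_geometric_of_lt_one (Real.exp_nonneg _) hr1).mul_left _
  have hle : ∀ k : ℕ, thetaMajorant t Y (k + m) ≤ thetaMajorant t Y m * r ^ k := by
    intro k
    rw [thetaMajorant_mul_pow]
    refine le_mul_of_one_le_right (Real.exp_nonneg _) (Real.one_le_exp ?_)
    have : (k : ℝ) ≤ k ^ 2 := by exact_mod_cast Nat.le_self_pow two_ne_zero k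
    exact mul_nonneg (mul_nonneg pi_pos.le (sub_nonneg.2 this)) ht.le
  have hlt : thetaMajorant t Y ((2 : ℕ) + m) < thetaMajorant t Y m * r ^ 2 := by
    rw [thetaMajorant_mul_pow]
    refine lt_mul_of_one_lt_right (Real.exp_pos _) (Real.one_lt_exp_iff.2 ?_)
    norm_num
    positivity
  refine ⟨hgeom.of_nonneg_of_le (fun _ ↦ Real.exp_nonneg _) hle, ?_⟩
  calc ∑' k : ℕ, thetaMajorant t Y (k + m) < ∑' k : ℕ, thetaMajorant t Y m * r ^ k :=
        Summable.tsum_lt_tsum_of_nonneg (fun _ ↦ Real.exp_nonneg _) hle hlt hgeom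
    _ = thetaMajorant t Y m / (1 - r) := by
        rw [tsum_mul_left, tsum_geometric_of_lt_one (Real.exp_nonneg _) hr1, div_eq_mul_inv]

lemma HasSum.norm_sub_sum_range_le {E : Type*} [NormedAddCommGroup E] {P : ℕ → E} {s : E}
    (hP : HasSum P s) (N : ℕ) {u : ℕ → ℝ} (hu : Summable u) (h : ∀ k, ‖P (k + N)‖ ≤ u k) :
    ‖s - ∑ i ∈ Finset.range N, P i‖ ≤ ∑' k, u k :=
  ((hasSum_nat_add_iff' N).2 hP).norm_le_of_bounded hu.hasSum h

lemma norm_theta1_zero_sub_one_lt (b : ℤ) (z τ : ℂ) (hz : |z.im| < 2 * τ.im) :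
    ‖theta1 0 b z τ - 1‖ < 2 * rexp (-π * τ.im) * Real.cosh (2 * π * z.im) +
        2 * rexp (-π * τ.im) ^ 4 * rexp (4 * π * |z.im|) /
          (1 - rexp (-π * τ.im) ^ 5 * rexp (2 * π * |z.im|)) := by
  have ht : 0 < τ.im := by linarith [abs_nonneg z.im]
  set P : ℕ → ℂ := fun k ↦ theta1Term 0 b z τ k + theta1Term 0 b z τ (-k)
  have hf0 : theta1Term 0 b z τ 0 = 1 := by simp [theta1Term]
  have hP : HasSum P (theta1 0 b z τ + 1) :=
    hf0 ▸ (hasSum_theta1Term 0 b z ht).nat_add_neg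
  have hhead : ‖P 1‖ ≤ 2 * rexp (-π * τ.im) * Real.cosh (2 * π * z.im) := by
    have hcosh : 2 * rexp (-π * τ.im) * Real.cosh (2 * π * z.im) =
        rexp (-π * τ.im + -(2 * π * z.im)) + rexp (-π * τ.im + 2 * π * z.im) := by
      rw [Real.cosh_eq, Real.exp_add, Real.exp_add]; ring
    refine (norm_add_le _ _).trans_eq ?_
    rw [norm_theta1Term, norm_theta1Term, hcosh]
    congr 1 <;> congr 1 <;> push_cast <;> ring
  obtain ⟨hsum, hlt⟩ := tsum_thetaMajorant_lt (Y := |z.im|) (m := 2) ht (by linarith)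
  have htail : ‖theta1 0 b z τ - 1 - P 1‖ ≤
      ∑' k : ℕ, 2 * thetaMajorant τ.im |z.im| (k + 2) := by
    have hsplit : theta1 0 b z τ + 1 - ∑ i ∈ Finset.range 2, P i =
        theta1 0 b z τ - 1 - P 1 := by
      simp only [Finset.sum_range_succ, Finset.sum_range_zero, P, Nat.cast_zero, neg_zero,
        hf0]
      ring
    refine hsplit ▸ hP.norm_sub_sum_range_le 2 (hsum.mul_left 2) fun k ↦ ?_
    simpa [P, abs_of_nonneg (by positivity : (0 : ℝ) ≤ k + 2)] using
      norm_theta1Term_add_theta1Term_neg_le 0 b z τ (k + 2)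
  rw [tsum_mul_left] at htail
  calc ‖theta1 0 b z τ - 1‖ ≤ ‖P 1‖ + ‖theta1 0 b z τ - 1 - P 1‖ :=
        norm_le_norm_add_norm_sub' _ _
    _ < 2 * rexp (-π * τ.im) * Real.cosh (2 * π * z.im) + 2 * (thetaMajorant τ.im |z.im| 2 /
          (1 - rexp (-π * ((2 * 2 + 1) * τ.im - 2 * |z.im|)))) :=
      add_lt_add_of_le_of_lt hhead (htail.trans_lt (by linarith))
    _ = _ := by
      rw [mul_assoc 2 (rexp _ ^ 4), exp_neg_pi_mul_pow_mul_exp, exp_neg_pi_mul_pow_mul_exp,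
        thetaMajorant]
      ring_nf

lemma norm_theta1_one_zero_div_sub_lt (z τ : ℂ) (hz : |z.im| < 2 * τ.im) :
    ‖theta1 1 0 z τ / cexp (π * I * τ / 4) - (cexp (π * I * z) + cexp (-(π * I * z)))‖ <
      2 * rexp (-π * τ.im) ^ 2 * rexp (3 * π * |z.im|) /
        (1 - rexp (-π * τ.im) ^ 4 * rexp (2 * π * |z.im|)) := by
  have ht : 0 < τ.im := by linarith [abs_nonneg z.im]
  set E := cexp (π * I * τ / 4)
  set P : ℕ → ℂ := fun k ↦ (theta1Term 1 0 z τ k + theta1Term 1 0 z τ (-k - 1)) / E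
  have hP : HasSum P (theta1 1 0 z τ / E) := by
    simpa only [P, neg_add'] using
      ((hasSum_theta1Term 1 0 z ht).nat_add_neg_add_one).div_const E
  have hhead : P 0 = cexp (π * I * z) + cexp (-(π * I * z)) := by
    simp only [P, theta1Term, E, add_div, ← Complex.exp_sub]
    push_cast
    congr 2 <;> ring
  have hE : ‖E‖ = rexp (-π * τ.im / 4) := by
    rw [Complex.norm_exp]
    congr 1
    simp [Complex.mul_re]
  obtain ⟨hsum, hlt⟩ := tsum_thetaMajorant_lt (Y := |z.im|) (m := 3 / 2) ht (by linarith)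
  have htail : ‖theta1 1 0 z τ / E - P 0‖ ≤
      ∑' k : ℕ, 2 * thetaMajorant τ.im |z.im| (k + 3 / 2) / ‖E‖ := by
    refine Finset.sum_range_one P ▸ hP.norm_sub_sum_range_le 1
      ((hsum.mul_left 2).div_const _) fun k ↦ ?_
    rw [norm_div]
    gcongr
    have hk : |(((k : ℤ) + 1 : ℤ) : ℝ) + ((1 : ℤ) : ℝ) / 2| = k + 3 / 2 := by
      rw [abs_of_nonneg (by positivity)]; push_cast; ring
    have := norm_theta1Term_add_theta1Term_neg_le 1 0 z τ (k + 1)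
    rw [hk] at this
    simpa [P] using this
  rw [tsum_div_const, tsum_mul_left, hhead] at htail
  calc _ < 2 * (thetaMajorant τ.im |z.im| (3 / 2) /
          (1 - rexp (-π * ((2 * (3 / 2) + 1) * τ.im - 2 * |z.im|)))) / ‖E‖ := by
        refine htail.trans_lt (div_lt_div_of_pos_right ?_ (norm_pos_iff.2 (exp_ne_zero _)))
        linarith
    _ = _ := by
      rw [hE, mul_assoc 2 (rexp _ ^ 2), exp_neg_pi_mul_pow_mul_exp, exp_neg_pi_mul_pow_mul_exp,
        thetaMajorant, mul_div_assoc, div_right_comm, ← Real.exp_sub]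
      ring_nf

theorem statement8_general (z τ : ℂ) (hz : |z.im| < 2 * τ.im)
    (q : ℝ) (hq : q = Real.exp (-Real.pi * τ.im)) :
    (∀ b : ℤ, b = 0 ∨ b = 1 →
      ‖theta1 0 b z τ - 1‖ <
        2 * q * Real.cosh (2 * Real.pi * z.im) +
          2 * q ^ 4 * Real.exp (4 * Real.pi * |z.im|) /
            (1 - q ^ 5 * Real.exp (2 * Real.pi * |z.im|))) ∧
    ‖theta1 1 0 z τ / Complex.exp ((Real.pi : ℂ) * Complex.I * τ / 4) -
        (Complex.exp ((Real.pi : ℂ) * Complex.I * z) +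
          Complex.exp (-((Real.pi : ℂ) * Complex.I * z)))‖ <
      2 * q ^ 2 * Real.exp (3 * Real.pi * |z.im|) /
        (1 - q ^ 4 * Real.exp (2 * Real.pi * |z.im|)) := by
  subst hq
  exact ⟨fun b _ ↦ norm_theta1_zero_sub_one_lt b z τ hz, norm_theta1_one_zero_div_sub_lt z τ hz⟩

theorem statement8 (z τ : ℂ) (hτ : 0 < τ.im) (hz : |z.im| < 2 * τ.im)
    (q : ℝ) (hq : q = Real.exp (-Real.pi * τ.im)) :
    (∀ b : ℤ, b = 0 ∨ b = 1 →
      ‖theta1 0 b z τ - 1‖ <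
        2 * q * Real.cosh (2 * Real.pi * z.im) +
          2 * q ^ 4 * Real.exp (4 * Real.pi * |z.im|) /
            (1 - q ^ 5 * Real.exp (2 * Real.pi * |z.im|))) ∧
    ‖theta1 1 0 z τ / Complex.exp ((Real.pi : ℂ) * Complex.I * τ / 4) -
        (Complex.exp ((Real.pi : ℂ) * Complex.I * z) +
          Complex.exp (-((Real.pi : ℂ) * Complex.I * z)))‖ <
      2 * q ^ 2 * Real.exp (3 * Real.pi * |z.im|) /
        (1 - q ^ 4 * Real.exp (2 * Real.pi * |z.im|)) :=
  statement8_general z τ hz q hq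
end

section
/- Let Θ be the function defined on the set of τ ∈ ℍ where θ_{0,0}(0, τ/2) ≠ 0 by Θ(τ) = θ_{0,1}(0, τ/2)/θ_{0,0}(0, τ/2). Then Θ is analytic on a neighborhood of R₁ and its derivative satisfies |Θ′(τ)| ≤ 125 for every τ ∈ R₁. -/
def R₁ : Set ℂ :=
  {τ | 0 < τ.im ∧ |τ.re| ≤ 1 / 2 ∧ 1 ≤ ‖τ‖ ∧ τ.im ≤ 2}

/-- The fundamental theta quotient Θ(τ) = θ_{0,1}(0, τ/2)/θ_{0,0}(0, τ/2)
(defined as a total function; it agrees with the intended quotient wherever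
θ_{0,0}(0, τ/2) ≠ 0, in particular on a neighborhood of R₁). -/
noncomputable def ThetaQuot (τ : ℂ) : ℂ :=
  theta1 0 1 0 (τ / 2) / theta1 0 0 0 (τ / 2)

/-!
Write Θ(τ) = ϑ(1/2, τ/2)/ϑ(0, τ/2) with Mathlib's `jacobiTheta₂`. For real z, the terms
n ≠ 0 of ϑ(z, w) have modulus q^{n²} ≤ q^{2|n|-1}, q = e^{-π Im w}, so
|ϑ(z, w) - 1| ≤ 2q/(1 - q²), which is at most 3/4 as soon as q ≤ 1/3, i.e. for Im w ≥ 3/8.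
Hence |Θ| ≤ (7/4)/(1/4) = 7 wherever Im τ ≥ 3/4. Every point of R₁ has Im τ ≥ √3/2 > 17/20,
so Θ is holomorphic on the closed disc of radius 1/10 about it, and Cauchy's estimate gives
|Θ'| ≤ 7 · 10 ≤ 125.
-/

open Complex Real Metric

lemma theta1_zero_eq_jacobiTheta₂ (b : ℤ) (z w : ℂ) :
    theta1 0 b z w = jacobiTheta₂ (z + b / 2) w := by
  unfold theta1 jacobiTheta₂ jacobiTheta₂_term
  congr 1 with n
  push_cast
  ring_nf

lemma ThetaQuot_eq_div_jacobiTheta₂ (τ : ℂ) :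
    ThetaQuot τ = jacobiTheta₂ (1 / 2) (τ / 2) / jacobiTheta₂ 0 (τ / 2) := by
  simp [ThetaQuot, theta1_zero_eq_jacobiTheta₂]

lemma norm_jacobiTheta₂_term_of_im_eq_zero {z : ℂ} (hz : z.im = 0) (n : ℤ) (w : ℂ) :
    ‖jacobiTheta₂_term n z w‖ = rexp (-π * w.im) ^ (n.natAbs ^ 2) := by
  rw [norm_jacobiTheta₂_term, hz, ← Real.exp_nat_mul]
  congr 1
  rw [Nat.cast_pow, Nat.cast_natAbs, Int.cast_abs, sq_abs]
  ring

lemma norm_jacobiTheta₂_sub_one_le {z w : ℂ} (hz : z.im = 0) (hw : 0 < w.im) :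
    ‖jacobiTheta₂ z w - 1‖ ≤ 2 * rexp (-π * w.im) / (1 - rexp (-π * w.im) ^ 2) := by
  set q := rexp (-π * w.im)
  have hq0 : 0 ≤ q := (exp_pos _).le
  have hq1 : q < 1 := exp_lt_one_iff.mpr (by nlinarith [pi_pos])
  have hpair : HasSum
      (fun k : ℕ => jacobiTheta₂_term (k + 1) z w + jacobiTheta₂_term (-(k + 1)) z w)
      (jacobiTheta₂ z w - 1) := by
    have h := (hasSum_jacobiTheta₂_term z hw).nat_add_neg
    rw [← hasSum_nat_add_iff' 1] at h
    have h0 : jacobiTheta₂_term 0 z w = 1 := by simp [jacobiTheta₂_term]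
    simp only [Finset.sum_range_one, Nat.cast_zero, neg_zero, h0, Nat.cast_add, Nat.cast_one] at h
    rwa [show jacobiTheta₂ z w + 1 - (1 + 1) = jacobiTheta₂ z w - 1 by ring] at h
  have hmajorant : HasSum (fun k : ℕ => 2 * q ^ (2 * k + 1)) (2 * q / (1 - q ^ 2)) := by
    have h := (hasSum_geometric_of_lt_one (sq_nonneg q)
      (pow_lt_one₀ hq0 hq1 two_ne_zero)).mul_left (2 * q)
    rw [← div_eq_mul_inv] at h
    exact h.congr_fun fun k => by ring
  refine hpair.norm_le_of_bounded hmajorant fun k => ?_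
  have hterm : ∀ n : ℤ, n.natAbs = k + 1 → ‖jacobiTheta₂_term n z w‖ ≤ q ^ (2 * k + 1) := by
    intro n hn
    rw [norm_jacobiTheta₂_term_of_im_eq_zero hz, hn]
    exact pow_le_pow_of_le_one hq0 hq1.le (by nlinarith)
  calc _ ≤ _ := norm_add_le _ _
    _ ≤ q ^ (2 * k + 1) + q ^ (2 * k + 1) := add_le_add (hterm _ (by omega)) (hterm _ (by omega))
    _ = _ := by ring

lemma exp_neg_pi_mul_le_one_third {y : ℝ} (hy : 3 / 8 ≤ y) : rexp (-π * y) ≤ 1 / 3 := by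
  have h3 : 3 ≤ rexp (π * y) :=
    calc (3 : ℝ) ≤ 2.7182818283 * (1 / 8 + 1) := by norm_num
      _ ≤ rexp 1 * rexp (1 / 8) := by
        gcongr
        · exact exp_one_gt_d9.le
        · exact add_one_le_exp _
      _ = rexp (1 + 1 / 8) := (Real.exp_add _ _).symm
      _ ≤ rexp (π * y) := exp_le_exp.mpr (by nlinarith [pi_gt_three])
  rw [neg_mul, Real.exp_neg, one_div]
  exact inv_anti₀ (by norm_num) h3

lemma norm_jacobiTheta₂_sub_one_le_three_quarters {z w : ℂ} (hz : z.im = 0) (hw : 3 / 8 ≤ w.im) :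
    ‖jacobiTheta₂ z w - 1‖ ≤ 3 / 4 := by
  have hq := exp_neg_pi_mul_le_one_third hw
  have hq0 := (exp_pos (-π * w.im)).le
  refine (norm_jacobiTheta₂_sub_one_le hz (by linarith)).trans ?_
  rw [div_le_iff₀ (by nlinarith)]
  nlinarith

lemma norm_ThetaQuot_le {τ : ℂ} (hτ : 3 / 4 ≤ τ.im) : ‖ThetaQuot τ‖ ≤ 7 := by
  have hw : 3 / 8 ≤ (τ / 2).im := by rw [div_ofNat_im]; linarith
  have hnum := norm_jacobiTheta₂_sub_one_le_three_quarters (z := 1 / 2) (by norm_num) hw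
  have hden := norm_jacobiTheta₂_sub_one_le_three_quarters (z := 0) (by norm_num) hw
  have hnum' : ‖jacobiTheta₂ (1 / 2) (τ / 2)‖ ≤ 7 / 4 := by
    linarith [norm_le_norm_add_norm_sub' (jacobiTheta₂ (1 / 2) (τ / 2)) 1, norm_one (α := ℂ)]
  have hden' : 1 / 4 ≤ ‖jacobiTheta₂ 0 (τ / 2)‖ := by
    linarith [norm_sub_norm_le (1 : ℂ) (jacobiTheta₂ 0 (τ / 2)), norm_one (α := ℂ),
      norm_sub_rev (1 : ℂ) (jacobiTheta₂ 0 (τ / 2))]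
  rw [ThetaQuot_eq_div_jacobiTheta₂, norm_div, div_le_iff₀ (by linarith)]
  linarith

lemma differentiableAt_ThetaQuot {τ : ℂ} (hτ : 3 / 4 ≤ τ.im) :
    DifferentiableAt ℂ ThetaQuot τ := by
  have hw : 3 / 8 ≤ (τ / 2).im := by rw [div_ofNat_im]; linarith
  have hden : jacobiTheta₂ 0 (τ / 2) ≠ 0 := by
    intro h
    have := norm_jacobiTheta₂_sub_one_le_three_quarters (z := 0) (by norm_num) hw
    norm_num [h] at this
  replace hw : 0 < (τ / 2).im := by linarith
  have hhalf : DifferentiableAt ℂ (fun w : ℂ => w / 2) τ := differentiableAt_id.div_const 2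
  simp_rw [funext ThetaQuot_eq_div_jacobiTheta₂]
  exact ((differentiableAt_jacobiTheta₂_snd _ hw).comp τ hhalf :).div
    ((differentiableAt_jacobiTheta₂_snd _ hw).comp τ hhalf :) hden

lemma le_im_of_mem_R₁ {τ : ℂ} (hτ : τ ∈ R₁) : 17 / 20 ≤ τ.im := by
  obtain ⟨him, hre, hnorm, -⟩ := hτ
  have hsq : 1 ≤ τ.re * τ.re + τ.im * τ.im := by
    rw [← normSq_apply, ← Complex.sq_norm]
    nlinarith
  nlinarith [abs_le.mp hre, sq_abs τ.re]

lemma im_sub_le_im_of_mem_closedBall {τ w : ℂ} {r : ℝ} (hw : w ∈ closedBall τ r) :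
    τ.im - r ≤ w.im := by
  rw [mem_closedBall, dist_eq_norm] at hw
  linarith [neg_abs_le (w - τ).im, abs_im_le_norm (w - τ), sub_im w τ]

theorem statement11 :
    AnalyticOnNhd ℂ ThetaQuot R₁ ∧
    ∀ τ ∈ R₁, ‖deriv ThetaQuot τ‖ ≤ 125 := by
  have him : ∀ τ ∈ R₁, ∀ w ∈ closedBall τ (1 / 10), 3 / 4 ≤ w.im := fun τ hτ w hw => by
    linarith [le_im_of_mem_R₁ hτ, im_sub_le_im_of_mem_closedBall hw]
  have hdiff : ∀ τ ∈ R₁, DifferentiableOn ℂ ThetaQuot (closedBall τ (1 / 10)) :=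
    fun τ hτ w hw => (differentiableAt_ThetaQuot (him τ hτ w hw)).differentiableWithinAt
  refine ⟨fun τ hτ => (hdiff τ hτ).analyticAt (closedBall_mem_nhds τ (by norm_num)),
    fun τ hτ => ?_⟩
  calc ‖deriv ThetaQuot τ‖ ≤ 7 / (1 / 10) :=
        norm_deriv_le_of_forall_mem_sphere_norm_le (by norm_num)
          ((hdiff τ hτ).diffContOnCl_ball subset_rfl)
          fun w hw => norm_ThetaQuot_le (him τ hτ w (sphere_subset_closedBall hw))
    _ ≤ 125 := by norm_num
end

section
/- Let (z, τ) ∈ S₁ and let a, b ∈ {0,1}. Then the following inequalities hold: |θ_{0,b}(z, τ/2) − 1| < 0.68; |θ_{a,b}(z, τ)| < 1.17; and |θ_{1,0}(z, τ)| > 0.37. -/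
/-- The set S₁ of reduced arguments (z, τ). -/
def S₁ : Set (ℂ × ℂ) :=
  {p | p.2 ∈ R₁ ∧ |p.1.im| ≤ p.2.im / 8 ∧ |p.1.re| ≤ 1 / 8}

open Real
open scoped Complex
open Complex (I)

noncomputable def thetaTerm (τ w : ℂ) (x : ℝ) : ℂ :=
  cexp (π * I * x ^ 2 * τ + 2 * π * I * x * w)

noncomputable def thetaTail (τ w : ℂ) (c : ℝ) : ℂ :=
  ∑' n : ℕ, (thetaTerm τ w (n + c) + thetaTerm τ w (-(n + c)))

section Decomposition

variable {τ : ℂ} (w : ℂ)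

lemma theta1_eq_tsum_thetaTerm (a b : ℤ) (z : ℂ) :
    theta1 a b z τ = ∑' n : ℤ, thetaTerm τ (z + b / 2) (n + a / 2) := by
  rw [theta1]
  refine tsum_congr fun n => ?_
  simp only [thetaTerm]
  push_cast
  ring_nf

lemma thetaTerm_zero : thetaTerm τ w 0 = 1 := by
  simp [thetaTerm]

lemma thetaTerm_neg (x : ℝ) : thetaTerm τ w (-x) = thetaTerm τ (-w) x := by
  simp only [thetaTerm]
  push_cast
  ring_nf

lemma summable_thetaTerm_int (hτ : 0 < τ.im) (c : ℝ) :
    Summable fun n : ℤ => thetaTerm τ w (n + c) := by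
  refine (((summable_jacobiTheta₂_term_iff (w + c * τ) τ).2 hτ).mul_left
    (thetaTerm τ w c)).congr fun n => ?_
  simp only [thetaTerm, jacobiTheta₂_term, ← Complex.exp_add]
  push_cast
  ring_nf

lemma summable_thetaTerm_nat (hτ : 0 < τ.im) (c : ℝ) :
    Summable fun n : ℕ => thetaTerm τ w (n + c) := by
  simpa using (summable_int_iff_summable_nat_and_neg.mp (summable_thetaTerm_int w hτ c)).1

lemma summable_thetaTerm_add_thetaTerm_neg (hτ : 0 < τ.im) (c : ℝ) :
    Summable fun n : ℕ => thetaTerm τ w (n + c) + thetaTerm τ w (-(n + c)) := by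
  simp only [thetaTerm_neg w]
  exact (summable_thetaTerm_nat w hτ c).add (summable_thetaTerm_nat (-w) hτ c)

lemma thetaTail_eq_add (hτ : 0 < τ.im) (c : ℝ) :
    thetaTail τ w c = thetaTerm τ w c + thetaTerm τ w (-c) + thetaTail τ w (c + 1) := by
  rw [thetaTail, (summable_thetaTerm_add_thetaTerm_neg w hτ c).tsum_eq_zero_add, thetaTail]
  simp only [Nat.cast_zero, zero_add, Nat.cast_succ, add_assoc, add_comm 1 c]

lemma theta1_zero_eq_one_add_thetaTail (hτ : 0 < τ.im) (b : ℤ) (z : ℂ) :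
    theta1 0 b z τ = 1 + thetaTail τ (z + b / 2) 1 := by
  have hpairs := tsum_nat_add_neg (summable_thetaTerm_int (z + b / 2) hτ 0)
  have hs := summable_thetaTerm_add_thetaTerm_neg (z + b / 2) hτ 0
  simp only [Int.cast_natCast, Int.cast_neg, Int.cast_zero, add_zero] at hpairs hs
  rw [hs.tsum_eq_zero_add] at hpairs
  simp only [Nat.cast_zero, neg_zero, thetaTerm_zero, Nat.cast_succ] at hpairs
  rw [theta1_eq_tsum_thetaTerm, thetaTail]
  simp only [Int.cast_zero, zero_div, add_zero]
  linear_combination -hpairs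

lemma theta1_one_eq_thetaTail (hτ : 0 < τ.im) (b : ℤ) (z : ℂ) :
    theta1 1 b z τ = thetaTail τ (z + b / 2) (1 / 2) := by
  rw [theta1_eq_tsum_thetaTerm, ← tsum_nat_add_neg_add_one (summable_thetaTerm_int _ hτ _),
    thetaTail]
  refine tsum_congr fun n => ?_
  push_cast
  ring_nf

lemma thetaTerm_half_add_thetaTerm_neg_half :
    thetaTerm τ w (1 / 2) + thetaTerm τ w (-(1 / 2)) =
      cexp (π * I * τ / 4) * (2 * Complex.cos (π * w)) := by
  rw [Complex.two_cos, mul_add, ← Complex.exp_add, ← Complex.exp_add, thetaTerm, thetaTerm]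
  push_cast
  ring_nf

end Decomposition

section Estimates

variable {τ w : ℂ}

lemma norm_thetaTerm (x : ℝ) :
    ‖thetaTerm τ w x‖ = rexp (-(π * x ^ 2 * τ.im) - 2 * π * x * w.im) := by
  rw [thetaTerm, Complex.norm_exp]
  congr 1
  simp [Complex.add_re, Complex.mul_re, Complex.mul_im, pow_two]
  ring

lemma norm_thetaTerm_add_norm_thetaTerm_neg_le {ε c : ℝ} (hw : |w.im| ≤ ε) (hc : 0 ≤ c) :
    ‖thetaTerm τ w c‖ + ‖thetaTerm τ w (-c)‖ ≤
      rexp (-(π * (c ^ 2 * τ.im - 2 * c * ε))) + rexp (-(π * (c ^ 2 * τ.im + 2 * c * ε))) := by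
  have hε : 0 ≤ ε := (abs_nonneg _).trans hw
  have hcosh : cosh (2 * π * c * w.im) ≤ cosh (2 * π * c * ε) := by
    rw [cosh_le_cosh, abs_mul, abs_of_nonneg (by positivity : 0 ≤ 2 * π * c),
      abs_of_nonneg (by positivity : 0 ≤ 2 * π * c * ε)]
    gcongr
  have key : ∀ y, rexp (-(π * c ^ 2 * τ.im) - 2 * π * c * y) +
      rexp (-(π * c ^ 2 * τ.im) + 2 * π * c * y) =
        rexp (-(π * c ^ 2 * τ.im)) * (2 * cosh (2 * π * c * y)) := fun y => by
    rw [cosh_eq, mul_div_cancel₀ _ two_ne_zero, mul_add, ← Real.exp_add, ← Real.exp_add]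
    ring_nf
  calc ‖thetaTerm τ w c‖ + ‖thetaTerm τ w (-c)‖
      = rexp (-(π * c ^ 2 * τ.im)) * (2 * cosh (2 * π * c * w.im)) := by
        rw [norm_thetaTerm, norm_thetaTerm, ← key]
        ring_nf
    _ ≤ rexp (-(π * c ^ 2 * τ.im)) * (2 * cosh (2 * π * c * ε)) := by gcongr
    _ = _ := by rw [← key]; ring_nf

/-- The exponents differ by `π ε (k n (n - 1) + (δ + 2) n) ≥ 0`. -/

lemma exp_le_rpow_mul_rpow_pow {ε k c δ : ℝ} (n : ℕ) (hε : 0 ≤ ε) (hk : 0 ≤ k) (hδ : -2 ≤ δ) :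
    rexp (-(π * ((n + c) ^ 2 * (k * ε) + δ * (n + c) * ε))) ≤
      rexp (-(π * ε)) ^ (k * c ^ 2 + δ * c) * (rexp (-(π * ε)) ^ (k * (1 + 2 * c) - 2)) ^ n := by
  rw [← Real.exp_mul, ← Real.exp_mul, ← Real.exp_nat_mul, ← Real.exp_add, exp_le_exp]
  have hn : (0 : ℝ) ≤ n * (n - 1) := by
    rcases n with _ | n
    · simp
    · push_cast; nlinarith
  have := mul_nonneg (mul_nonneg pi_pos.le hε) (add_nonneg (mul_nonneg hk hn)
    (mul_nonneg (by linarith : 0 ≤ δ + 2) n.cast_nonneg))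
  linear_combination this

lemma norm_thetaTail_le {ε k c : ℝ} (hε : 0 < ε) (hw : |w.im| ≤ ε) (hτ : τ.im = k * ε)
    (hk : 0 ≤ k) (hc : 0 ≤ c) (hm : 2 < k * (1 + 2 * c)) :
    ‖thetaTail τ w c‖ ≤
      (rexp (-(π * ε)) ^ (k * c ^ 2 - 2 * c) + rexp (-(π * ε)) ^ (k * c ^ 2 + 2 * c)) /
        (1 - rexp (-(π * ε)) ^ (k * (1 + 2 * c) - 2)) := by
  have hs : rexp (-(π * ε)) < 1 := Real.exp_lt_one_iff.2 (by nlinarith [pi_pos])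
  have hr := Real.rpow_lt_one (exp_pos _).le hs (by linarith : 0 < k * (1 + 2 * c) - 2)
  rw [div_eq_mul_inv]
  refine tsum_of_norm_bounded
    ((hasSum_geometric_of_lt_one (Real.rpow_nonneg (exp_pos _).le _) hr).mul_left _) fun n => ?_
  have h₁ : rexp (-(π * ((n + c) ^ 2 * τ.im - 2 * (n + c) * ε))) ≤
      rexp (-(π * ε)) ^ (k * c ^ 2 - 2 * c) * (rexp (-(π * ε)) ^ (k * (1 + 2 * c) - 2)) ^ n := by
    convert exp_le_rpow_mul_rpow_pow n hε.le hk (le_refl (-2)) using 4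
    · rw [hτ]; ring
    · ring
  have h₂ : rexp (-(π * ((n + c) ^ 2 * τ.im + 2 * (n + c) * ε))) ≤
      rexp (-(π * ε)) ^ (k * c ^ 2 + 2 * c) * (rexp (-(π * ε)) ^ (k * (1 + 2 * c) - 2)) ^ n := by
    rw [hτ]
    exact exp_le_rpow_mul_rpow_pow n hε.le hk (by norm_num)
  calc ‖thetaTerm τ w (n + c) + thetaTerm τ w (-(n + c))‖
      ≤ ‖thetaTerm τ w (n + c)‖ + ‖thetaTerm τ w (-(n + c))‖ := norm_add_le _ _
    _ ≤ _ := norm_thetaTerm_add_norm_thetaTerm_neg_le hw (by positivity)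
    _ ≤ _ := add_le_add h₁ h₂
    _ = _ := by ring

end Estimates

lemma re_cos_pi_mul (w : ℂ) :
    (Complex.cos (π * w)).re = Real.cos (π * w.re) * Real.cosh (π * w.im) := by
  rw [Complex.cos_eq, Complex.re_ofReal_mul, Complex.im_ofReal_mul, ← Complex.ofReal_cos,
    ← Complex.ofReal_cosh, ← Complex.ofReal_sin, ← Complex.ofReal_sinh]
  simp only [Complex.sub_re, Complex.mul_re, Complex.mul_im, Complex.ofReal_re, Complex.ofReal_im,
    Complex.I_re, Complex.I_im]
  ring

lemma le_norm_cos_pi_mul {w : ℂ} (hw : |w.re| ≤ 1 / 8) : 0.9228 ≤ ‖Complex.cos (π * w)‖ := by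
  have hre : w.re ^ 2 ≤ 1 / 64 := by nlinarith [abs_nonneg w.re, sq_abs w.re]
  have hpi : π ^ 2 ≤ 3.1416 ^ 2 := by nlinarith [pi_pos, pi_lt_d4]
  have hcos : 0.9228 ≤ Real.cos (π * w.re) := by
    nlinarith [one_sub_sq_div_two_le_cos (x := π * w.re), mul_le_mul hpi hre (sq_nonneg _)
      (sq_nonneg _)]
  calc (0.9228 : ℝ) ≤ Real.cos (π * w.re) := hcos
    _ ≤ Real.cos (π * w.re) * Real.cosh (π * w.im) :=
        le_mul_of_one_le_right (by linarith) (one_le_cosh _)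
    _ = (Complex.cos (π * w)).re := (re_cos_pi_mul w).symm
    _ ≤ ‖Complex.cos (π * w)‖ := Complex.re_le_norm _

lemma R₁.exp_neg_pi_im_div_eight_mem_Icc {τ : ℂ} (hτ : τ ∈ R₁) :
    rexp (-(π * (τ.im / 8))) ∈ Set.Icc 0.4545 0.7125 := by
  obtain ⟨him, hre, hnorm, him2⟩ := hτ
  have hsq : ‖τ‖ ^ 2 = τ.re ^ 2 + τ.im ^ 2 := by
    rw [Complex.sq_norm, Complex.normSq_apply]; ring
  have hre2 : τ.re ^ 2 ≤ 1 / 4 := by nlinarith [abs_nonneg τ.re, sq_abs τ.re]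
  have him3 : 0.866 ≤ τ.im := by nlinarith
  have := pi_gt_d4
  have := pi_lt_d4
  rw [Set.mem_Icc, Real.exp_neg, le_inv_comm₀ (by norm_num) (exp_pos _),
    inv_le_comm₀ (exp_pos _) (by norm_num)]
  constructor
  · calc rexp (π * (τ.im / 8)) ≤ rexp 0.7854 := exp_le_exp.2 (by nlinarith)
      _ ≤ _ := Real.exp_bound' (by norm_num) (by norm_num) four_pos
      _ ≤ 0.4545⁻¹ := by norm_num [Finset.sum_range_succ, Nat.factorial]
  · calc (0.7125 : ℝ)⁻¹ ≤ ∑ i ∈ Finset.range 4, (0.34 : ℝ) ^ i / i.factorial := by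
          norm_num [Finset.sum_range_succ, Nat.factorial]
      _ ≤ rexp 0.34 := sum_le_exp_of_nonneg (by norm_num) 4
      _ ≤ rexp (π * (τ.im / 8)) := exp_le_exp.2 (by nlinarith)

lemma rpow_add_rpow_div_one_sub_rpow_le {s x a b m : ℝ} (hs : 0 ≤ s) (hsx : s ≤ x)
    (ha : 0 ≤ a) (hb : 0 ≤ b) (hm : 0 ≤ m) (hx : x ^ m < 1) :
    (s ^ a + s ^ b) / (1 - s ^ m) ≤ (x ^ a + x ^ b) / (1 - x ^ m) := by
  have : 0 ≤ x := hs.trans hsx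
  gcongr

lemma norm_thetaTail_le_of_mem_R₁ {τ τ' w : ℂ} {k c : ℝ} (hτ : τ ∈ R₁)
    (hw : |w.im| ≤ τ.im / 8) (hτ' : τ'.im = k * (τ.im / 8)) (hk : 0 ≤ k) (hkc : 2 ≤ k * c) :
    ‖thetaTail τ' w c‖ ≤
      (0.7125 ^ (k * c ^ 2 - 2 * c) + 0.7125 ^ (k * c ^ 2 + 2 * c)) /
        (1 - 0.7125 ^ (k * (1 + 2 * c) - 2)) := by
  have hc : 0 ≤ c := by nlinarith
  refine (norm_thetaTail_le (by linarith [hτ.1]) hw hτ' hk hc (by nlinarith)).trans ?_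
  exact rpow_add_rpow_div_one_sub_rpow_le (exp_pos _).le
    (R₁.exp_neg_pi_im_div_eight_mem_Icc hτ).2 (by nlinarith) (by nlinarith) (by nlinarith)
    (Real.rpow_lt_one (by norm_num) (by norm_num) (by nlinarith))

lemma norm_theta1_zero_half_sub_one_lt {z τ : ℂ} (h : (z, τ) ∈ S₁) (b : ℤ) :
    ‖theta1 0 b z (τ / 2) - 1‖ < 0.68 := by
  obtain ⟨hτ, hz, -⟩ := h
  rw [theta1_zero_eq_one_add_thetaTail (by simpa using hτ.1) b z, add_sub_cancel_left]
  refine (norm_thetaTail_le_of_mem_R₁ (k := 4) (c := 1) hτ (by simpa using hz) (by simp; ring)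
    (by norm_num) (by norm_num)).trans_lt (by norm_num)

lemma norm_theta1_zero_lt {z τ : ℂ} (h : (z, τ) ∈ S₁) (b : ℤ) : ‖theta1 0 b z τ‖ < 1.17 := by
  obtain ⟨hτ, hz, -⟩ := h
  have htail := norm_thetaTail_le_of_mem_R₁ (τ' := τ) (w := z + b / 2) (k := 8) (c := 1) hτ
    (by simpa using hz) (by ring) (by norm_num) (by norm_num)
  norm_num at htail
  calc ‖theta1 0 b z τ‖ = ‖1 + thetaTail τ (z + b / 2) 1‖ := by
        rw [theta1_zero_eq_one_add_thetaTail hτ.1]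
    _ ≤ 1 + ‖thetaTail τ (z + b / 2) 1‖ := (norm_add_le _ _).trans_eq (by rw [norm_one])
    _ < 1.17 := by linarith

lemma norm_theta1_one_lt {z τ : ℂ} (h : (z, τ) ∈ S₁) (b : ℤ) : ‖theta1 1 b z τ‖ < 1.17 := by
  obtain ⟨hτ, hz, -⟩ := h
  rw [theta1_one_eq_thetaTail hτ.1]
  refine (norm_thetaTail_le_of_mem_R₁ (k := 8) (c := 1 / 2) hτ (by simpa using hz) (by ring)
    (by norm_num) (by norm_num)).trans_lt (by norm_num)

lemma norm_cexp_pi_mul_I_mul_div_four (τ : ℂ) :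
    ‖cexp (π * I * τ / 4)‖ = rexp (-(π * (τ.im / 8))) ^ 2 := by
  rw [Complex.norm_exp, ← Real.exp_nat_mul]
  congr 1
  simp
  ring

lemma lt_norm_theta1_one_zero {z τ : ℂ} (h : (z, τ) ∈ S₁) : 0.37 < ‖theta1 1 0 z τ‖ := by
  obtain ⟨hτ, hz, hzre⟩ := h
  have hs₀ := (R₁.exp_neg_pi_im_div_eight_mem_Icc hτ).1
  have hθ : theta1 1 0 z τ =
      thetaTerm τ z (1 / 2) + thetaTerm τ z (-(1 / 2)) + thetaTail τ z (3 / 2) := by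
    rw [theta1_one_eq_thetaTail hτ.1, thetaTail_eq_add _ hτ.1]
    norm_num
  have hhead : 2 * 0.9228 * 0.4545 ^ 2 ≤ ‖thetaTerm τ z (1 / 2) + thetaTerm τ z (-(1 / 2))‖ := by
    rw [thetaTerm_half_add_thetaTerm_neg_half, norm_mul, norm_mul,
      norm_cexp_pi_mul_I_mul_div_four, Complex.norm_two]
    have hcos := le_norm_cos_pi_mul hzre
    have hs₀_sq := pow_le_pow_left₀ (by norm_num) hs₀ 2
    nlinarith
  have htail := norm_thetaTail_le_of_mem_R₁ (τ' := τ) (k := 8) (c := 3 / 2) hτ hz (by ring)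
    (by norm_num) (by norm_num)
  norm_num at htail hhead
  rw [hθ]
  linarith [norm_sub_le_norm_add (thetaTerm τ z (1 / 2) + thetaTerm τ z (-(1 / 2)))
    (thetaTail τ z (3 / 2))]

theorem statement12_general (z τ : ℂ) (h : (z, τ) ∈ S₁)
    (a b : ℤ) (ha : a = 0 ∨ a = 1) :
    ‖theta1 0 b z (τ / 2) - 1‖ < 0.68 ∧
    ‖theta1 a b z τ‖ < 1.17 ∧
    0.37 < ‖theta1 1 0 z τ‖ := by
  refine ⟨norm_theta1_zero_half_sub_one_lt h b, ?_, lt_norm_theta1_one_zero h⟩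
  rcases ha with rfl | rfl
  · exact norm_theta1_zero_lt h b
  · exact norm_theta1_one_lt h b

theorem statement12 (z τ : ℂ) (h : (z, τ) ∈ S₁)
    (a b : ℤ) (ha : a = 0 ∨ a = 1) (hb : b = 0 ∨ b = 1) :
    ‖theta1 0 b z (τ / 2) - 1‖ < 0.68 ∧
    ‖theta1 a b z τ‖ < 1.17 ∧
    0.37 < ‖theta1 1 0 z τ‖ :=
  statement12_general z τ h a b ha
end
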